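/- Let φ_1, φ_2 ∈ Φ, let K, L ∈ 𝒦ⁿ, let i be an integer with 0 ≤ i < n, and fix a unit vector u ∈ S^{n−1}. Then the right derivative at ε = 0 of the function ε ↦ b(K +_φ ε·L, u)^{n−i} exists and equals ((n−i)/(φ_1)'_r(1)) · φ_2(b(L,u)/b(K,u)) · b(K,u)^{n−i}, where (φ_1)'_r(1) denotes the right derivative of φ_1 at 1 (which exists and is negative since φ_1 is convex and strictly decreasing). -/

import Mathlib

open MeasureTheory Metric Filter Set
open scoped RealInnerProductSpace ENNReal

noncomputable section

abbrev Euc (n : ℕ) := EuclideanSpace ℝ (Fin n)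

/-- Support function `h(K,x) = sup {⟨x,y⟩ : y ∈ K}`. -/
def suppFn {n : ℕ} (K : Set (Euc n)) (x : Euc n) : ℝ :=
  sSup ((fun y => ⟪x, y⟫) '' K)

/-- Half width of `K` in direction `u`: `b(K,u) = (h(K,u)+h(K,-u))/2`. -/
def halfWidth {n : ℕ} (K : Set (Euc n)) (u : Euc n) : ℝ :=
  (suppFn K u + suppFn K (-u)) / 2

/-- A convex body containing the origin in its interior. -/
def IsConvexBody {n : ℕ} (K : Set (Euc n)) : Prop :=
  IsCompact K ∧ Convex ℝ K ∧ (0 : Euc n) ∈ interior K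

/-- Spherical Lebesgue measure on the unit sphere. -/
def sphMeasure (n : ℕ) : Measure (sphere (0 : Euc n) 1) :=
  (volume : Measure (Euc n)).toSphere

/-- Width integral `A_i(K) = (1/n) ∫_{S^{n-1}} b(K,u)^{n-i} dS(u)`. -/
def widthIntegral (n i : ℕ) (K : Set (Euc n)) : ℝ :=
  (1 / (n : ℝ)) * ∫ u : sphere (0 : Euc n) 1,
    halfWidth K (u : Euc n) ^ ((n : ℝ) - i) ∂(sphMeasure n)

/-- `K` and `L` have similar width: `b(L,·) = λ b(K,·)` on the sphere for some `λ > 0`. -/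
def SimilarWidth {n : ℕ} (K L : Set (Euc n)) : Prop :=
  ∃ lam : ℝ, 0 < lam ∧ ∀ u : Euc n, ‖u‖ = 1 → halfWidth L u = lam * halfWidth K u

/-- The class `Φ`: convex, strictly decreasing `φ : (0,∞) → (0,∞)` with
`φ(0⁺)=∞`, `φ(∞)=0`, `φ(1)=1`. -/
structure IsOrliczPhi (φ : ℝ → ℝ) : Prop where
  convexOn : ConvexOn ℝ (Set.Ioi (0 : ℝ)) φ
  strictAntiOn : StrictAntiOn φ (Set.Ioi (0 : ℝ))
  pos : ∀ t : ℝ, 0 < t → 0 < φ t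
  tendsto_zero : Filter.Tendsto φ (nhdsWithin 0 (Set.Ioi 0)) Filter.atTop
  tendsto_atTop : Filter.Tendsto φ Filter.atTop (nhds 0)
  one : φ 1 = 1

/-- Half-width function of the Orlicz width linear combination `K +_φ ε·L`,
given the half widths `bK = b(K,u)`, `bL = b(L,u)`:
`sup {λ > 0 : φ₁(bK/λ) + ε φ₂(bL/λ) ≤ 1}`. -/
def orliczComb (φ₁ φ₂ : ℝ → ℝ) (ε bK bL : ℝ) : ℝ :=
  sSup {lam : ℝ | 0 < lam ∧ φ₁ (bK / lam) + ε * φ₂ (bL / lam) ≤ 1}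

lemma IsOrliczPhi.contOn {φ : ℝ → ℝ} (h : IsOrliczPhi φ) : ContinuousOn φ (Set.Ioi 0) :=
  h.convexOn.continuousOn isOpen_Ioi

lemma suppFn_ge {n : ℕ} {K : Set (Euc n)} (hK : IsConvexBody K) {r : ℝ} (hr : 0 < r)
    (hball : ball (0 : Euc n) r ⊆ K) (v : Euc n) (hv : ‖v‖ = 1) : r / 2 ≤ suppFn K v := by
  have hmem : (r / 2) • v ∈ K := by
    apply hball
    simp only [mem_ball, dist_zero_right, norm_smul, hv, mul_one]
    rw [Real.norm_eq_abs, abs_of_pos (by linarith)]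
    linarith
  have hbdd : BddAbove ((fun y => ⟪v, y⟫) '' K) :=
    (hK.1.image (continuous_const.inner continuous_id)).bddAbove
  have : ⟪v, (r / 2) • v⟫ = r / 2 := by
    rw [real_inner_smul_right, real_inner_self_eq_norm_sq, hv]
    ring
  calc r / 2 = ⟪v, (r / 2) • v⟫ := this.symm
    _ ≤ suppFn K v := le_csSup hbdd (mem_image_of_mem _ hmem)

lemma halfWidth_pos {n : ℕ} {K : Set (Euc n)} (hK : IsConvexBody K) {u : Euc n}
    (hu : ‖u‖ = 1) : 0 < halfWidth K u := by
  obtain ⟨r, hr, hball⟩ := Metric.mem_nhds_iff.1 (mem_interior_iff_mem_nhds.1 hK.2.2)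
  have h1 := suppFn_ge hK hr hball u hu
  have h2 := suppFn_ge hK hr hball (-u) (by simpa using hu)
  unfold halfWidth
  linarith

/-- Existence of the right derivative of `φ` at `1`, as a limit of slopes. -/
lemma IsOrliczPhi.exists_rightDeriv {φ : ℝ → ℝ} (h : IsOrliczPhi φ) :
    ∃ d : ℝ, Tendsto (slope φ 1) (nhdsWithin 1 (Set.Ioi 1)) (nhds d) ∧ d < 0 := by
  have h1 : (1 : ℝ) ∈ Set.Ioi (0 : ℝ) := by norm_num
  have hmono : MonotoneOn (slope φ 1) (Set.Ioi (0 : ℝ) \ {1}) := h.convexOn.slope_mono h1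
  have hsub : Set.Ioi (1 : ℝ) ⊆ Set.Ioi (0 : ℝ) \ {1} :=
    fun x hx => ⟨mem_Ioi.2 (lt_trans zero_lt_one (mem_Ioi.1 hx)), ne_of_gt (mem_Ioi.1 hx)⟩
  have hmono' : MonotoneOn (slope φ 1) (Set.Ioi (1 : ℝ)) := hmono.mono hsub
  have hhalf : (1 / 2 : ℝ) ∈ Set.Ioi (0 : ℝ) \ {1} := by norm_num
  have hbdd : BddBelow (slope φ 1 '' Set.Ioi 1) := by
    refine ⟨slope φ 1 (1 / 2), ?_⟩
    rintro y ⟨x, hx, rfl⟩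
    exact hmono hhalf (hsub hx) (by linarith [mem_Ioi.1 hx])
  refine ⟨sInf (slope φ 1 '' Set.Ioi 1), hmono'.tendsto_nhdsGT hbdd, ?_⟩
  have h2 : slope φ 1 2 < 0 := by
    rw [slope_def_field]
    have h21 : φ 2 < φ 1 := h.strictAntiOn h1 (by norm_num) one_lt_two
    apply div_neg_of_neg_of_pos <;> linarith
  exact lt_of_le_of_lt (csInf_le hbdd (mem_image_of_mem _ (by norm_num))) h2

/-- For `ε > 0`, `orliczComb φ₁ φ₂ ε bK bL` is the unique root in `(0, bK)` of
`φ₁(bK/λ) + ε φ₂(bL/λ) = 1`, and dominates every `λ` with value `≤ 1`. -/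
lemma orliczComb_spec {φ₁ φ₂ : ℝ → ℝ} (h₁ : IsOrliczPhi φ₁) (h₂ : IsOrliczPhi φ₂)
    {ε bK bL : ℝ} (hε : 0 < ε) (hbK : 0 < bK) (hbL : 0 < bL) :
    0 < orliczComb φ₁ φ₂ ε bK bL ∧ orliczComb φ₁ φ₂ ε bK bL < bK ∧
      φ₁ (bK / orliczComb φ₁ φ₂ ε bK bL) + ε * φ₂ (bL / orliczComb φ₁ φ₂ ε bK bL) = 1 ∧
      ∀ lam, 0 < lam → φ₁ (bK / lam) + ε * φ₂ (bL / lam) ≤ 1 →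
        lam ≤ orliczComb φ₁ φ₂ ε bK bL := by
  set F : ℝ → ℝ := fun lam => φ₁ (bK / lam) + ε * φ₂ (bL / lam) with hF
  set S : Set ℝ := {lam : ℝ | 0 < lam ∧ F lam ≤ 1} with hS
  have horl : orliczComb φ₁ φ₂ ε bK bL = sSup S := rfl
  -- strict monotonicity of F on Ioi 0
  have hFmono : StrictMonoOn F (Set.Ioi 0) := by
    intro a ha b hb hab
    have ha' : (0:ℝ) < a := ha
    have hb' : (0:ℝ) < b := hb
    have h1 : bK / b < bK / a := by
      apply div_lt_div_of_pos_left hbK ha' hab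
    have h2 : bL / b < bL / a := div_lt_div_of_pos_left hbL ha' hab
    have p1 : φ₁ (bK / a) < φ₁ (bK / b) :=
      h₁.strictAntiOn (by exact div_pos hbK hb') (by exact div_pos hbK ha') h1
    have p2 : φ₂ (bL / a) < φ₂ (bL / b) :=
      h₂.strictAntiOn (by exact div_pos hbL hb') (by exact div_pos hbL ha') h2
    have := mul_lt_mul_of_pos_left p2 hε
    simp only [hF]
    linarith
  -- continuity of F on Ioi 0
  have hFcont : ContinuousOn F (Set.Ioi 0) := by
    have hd : ∀ c : ℝ, 0 < c → ContinuousOn (fun lam : ℝ => c / lam) (Set.Ioi 0) :=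
      fun c hc => ContinuousOn.div continuousOn_const continuousOn_id
        (fun x hx => ne_of_gt hx)
    have hmap : ∀ c : ℝ, 0 < c → Set.MapsTo (fun lam : ℝ => c / lam) (Set.Ioi 0) (Set.Ioi 0) :=
      fun c hc x hx => div_pos hc hx
    exact ((h₁.contOn.comp (hd bK hbK) (hmap bK hbK)).add
      (continuousOn_const.mul (h₂.contOn.comp (hd bL hbL) (hmap bL hbL))))
  -- S is nonempty
  have hF0 : Tendsto F (nhdsWithin 0 (Set.Ioi 0)) (nhds (0 + ε * 0)) := by
    have hdiv : ∀ c : ℝ, 0 < c →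
        Tendsto (fun lam : ℝ => c / lam) (nhdsWithin 0 (Set.Ioi 0)) atTop := by
      intro c hc
      simpa [div_eq_mul_inv] using tendsto_inv_nhdsGT_zero.const_mul_atTop hc
    exact ((h₁.tendsto_atTop.comp (hdiv bK hbK)).add
      ((h₂.tendsto_atTop.comp (hdiv bL hbL)).const_mul ε))
  have hSne : S.Nonempty := by
    have hev : ∀ᶠ lam in nhdsWithin 0 (Set.Ioi 0), F lam < 1 :=
      hF0.eventually_lt_const (by norm_num)
    have hev' : ∀ᶠ lam in nhdsWithin 0 (Set.Ioi 0), lam ∈ S := by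
      filter_upwards [hev, self_mem_nhdsWithin] with lam h1 h2
      exact ⟨h2, le_of_lt h1⟩
    exact hev'.exists
  -- S is bounded above by bK
  have hSbdd : ∀ lam ∈ S, lam ≤ bK := by
    rintro lam ⟨hlam, hle⟩
    by_contra hcon
    push_neg at hcon
    have h1 : bK / lam < 1 := (div_lt_one hlam).2 hcon
    have h2 : (1:ℝ) < φ₁ (bK / lam) := by
      have := h₁.strictAntiOn (div_pos hbK hlam) (by norm_num) h1
      rw [h₁.one] at this; exact this
    have h3 : 0 < ε * φ₂ (bL / lam) := mul_pos hε (h₂.pos _ (div_pos hbL hlam))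
    simp only [hF] at hle; linarith
  have hbdd : BddAbove S := ⟨bK, hSbdd⟩
  obtain ⟨lam₀, hlam₀⟩ := id hSne
  set L := sSup S with hL
  have hLpos : 0 < L := lt_of_lt_of_le hlam₀.1 (le_csSup hbdd hlam₀)
  have hLle : L ≤ bK := csSup_le hSne hSbdd
  have hLcont : ContinuousAt F L :=
    hFcont.continuousAt (Ioi_mem_nhds hLpos)
  -- F L ≤ 1
  have hFL_le : F L ≤ 1 := by
    by_contra hcon
    push_neg at hcon
    have hev : ∀ᶠ x in nhds L, 1 < F x := hLcont.eventually_const_lt hcon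
    obtain ⟨δ, hδ, hδ'⟩ := Metric.eventually_nhds_iff.1 hev
    obtain ⟨s, hsS, hs⟩ := exists_lt_of_lt_csSup hSne (by linarith : L - δ < L)
    have hsle : s ≤ L := le_csSup hbdd hsS
    have : 1 < F s := hδ' (by rw [Real.dist_eq, abs_lt]; constructor <;> linarith)
    exact absurd hsS.2 (by linarith)
  -- F L ≥ 1
  have hFL_ge : 1 ≤ F L := by
    by_contra hcon
    push_neg at hcon
    have hev : ∀ᶠ x in nhds L, F x < 1 := hLcont.eventually_lt_const hcon
    obtain ⟨δ, hδ, hδ'⟩ := Metric.eventually_nhds_iff.1 hev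
    have hmem : L + δ / 2 ∈ S := by
      refine ⟨by linarith, le_of_lt (hδ' ?_)⟩
      rw [Real.dist_eq, abs_lt]; constructor <;> linarith
    have := le_csSup hbdd hmem
    linarith
  have hFL : F L = 1 := le_antisymm hFL_le hFL_ge
  have hLlt : L < bK := by
    rcases lt_or_eq_of_le hLle with h | h
    · exact h
    · exfalso
      have : F bK = 1 + ε * φ₂ (bL / bK) := by
        simp only [hF, div_self (ne_of_gt hbK), h₁.one]
      have hpos : 0 < ε * φ₂ (bL / bK) := mul_pos hε (h₂.pos _ (div_pos hbL hbK))
      rw [h, this] at hFL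
      linarith
  exact ⟨by rw [horl]; exact hLpos, by rw [horl]; exact hLlt,
    by rw [horl]; exact hFL,
    fun lam hlam hle => by rw [horl]; exact le_csSup hbdd ⟨hlam, hle⟩⟩

lemma tendsto_orliczComb {φ₁ φ₂ : ℝ → ℝ} (h₁ : IsOrliczPhi φ₁) (h₂ : IsOrliczPhi φ₂)
    {bK bL : ℝ} (hbK : 0 < bK) (hbL : 0 < bL) :
    Tendsto (fun ε => orliczComb φ₁ φ₂ ε bK bL) (nhdsWithin 0 (Set.Ioi 0)) (nhds bK) := by
  rw [tendsto_order]
  constructor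
  · intro a ha
    set lam₀ := (max a (bK / 2) + bK) / 2 with hlam₀
    have hmax1 : bK / 2 ≤ max a (bK / 2) := le_max_right _ _
    have hmax2 : a ≤ max a (bK / 2) := le_max_left _ _
    have hmax3 : max a (bK / 2) < bK := max_lt ha (by linarith)
    have h0 : 0 < lam₀ := by rw [hlam₀]; linarith
    have hlt : lam₀ < bK := by rw [hlam₀]; linarith
    have hagt : a < lam₀ := by rw [hlam₀]; linarith
    have harg : 1 < bK / lam₀ := (one_lt_div h0).2 hlt
    have hphi : φ₁ (bK / lam₀) < 1 := by
      have := h₁.strictAntiOn (mem_Ioi.2 one_pos) (mem_Ioi.2 (lt_trans one_pos harg)) harg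
      rw [h₁.one] at this; exact this
    have hφ₂pos : 0 < φ₂ (bL / lam₀) := h₂.pos _ (div_pos hbL h0)
    set ε₀ := (1 - φ₁ (bK / lam₀)) / φ₂ (bL / lam₀) with hε₀
    have hε₀pos : 0 < ε₀ := div_pos (by linarith) hφ₂pos
    filter_upwards [Ioo_mem_nhdsGT_of_mem ⟨le_refl (0:ℝ), hε₀pos⟩] with ε hε
    obtain ⟨hε1, hε2⟩ := hε
    have hle : φ₁ (bK / lam₀) + ε * φ₂ (bL / lam₀) ≤ 1 := by
      have h5 : ε * φ₂ (bL / lam₀) < ε₀ * φ₂ (bL / lam₀) := mul_lt_mul_of_pos_right hε2 hφ₂pos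
      rw [hε₀, div_mul_cancel₀ _ (ne_of_gt hφ₂pos)] at h5
      linarith
    have := (orliczComb_spec h₁ h₂ hε1 hbK hbL).2.2.2 lam₀ h0 hle
    linarith
  · intro a ha
    filter_upwards [self_mem_nhdsWithin] with ε hε
    have := (orliczComb_spec h₁ h₂ hε hbK hbL).2.1
    linarith

lemma orliczComb_hasDerivWithinAt {φ₁ φ₂ : ℝ → ℝ} (h₁ : IsOrliczPhi φ₁) (h₂ : IsOrliczPhi φ₂)
    {bK bL d : ℝ} (hbK : 0 < bK) (hbL : 0 < bL)
    (hd : Tendsto (slope φ₁ 1) (nhdsWithin 1 (Set.Ioi 1)) (nhds d)) (hdneg : d < 0) :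
    HasDerivWithinAt (fun ε : ℝ => if ε = 0 then bK else orliczComb φ₁ φ₂ ε bK bL)
      (bK * φ₂ (bL / bK) / d) (Set.Ici 0) 0 := by
  set f : ℝ → ℝ := fun ε => if ε = 0 then bK else orliczComb φ₁ φ₂ ε bK bL with hf
  rw [hasDerivWithinAt_iff_tendsto_slope]
  have hset : Set.Ici (0:ℝ) \ {0} = Set.Ioi 0 := by
    ext x; simp [lt_iff_le_and_ne, eq_comm]
  rw [hset]
  set g : ℝ → ℝ := fun s => bK * φ₂ (bL / bK * s) / (s * slope φ₁ 1 s) with hg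
  set t : ℝ → ℝ := fun ε => bK / orliczComb φ₁ φ₂ ε bK bL with ht
  have hkey : ∀ ε : ℝ, 0 < ε → slope f 0 ε = g (t ε) := by
    intro ε hε
    obtain ⟨hpos, hlt, heq, -⟩ := orliczComb_spec h₁ h₂ hε hbK hbL
    set lam := orliczComb φ₁ φ₂ ε bK bL with hlam
    have hs1 : 1 < bK / lam := (one_lt_div hpos).2 hlt
    have hc : bL / bK * (bK / lam) = bL / lam := by
      field_simp
    have hslope : slope φ₁ 1 (bK / lam) = -(ε * φ₂ (bL / lam)) / (bK / lam - 1) := by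
      rw [slope_def_field, h₁.one]
      congr 1
      linarith [heq]
    have hφ₂pos : 0 < φ₂ (bL / lam) := h₂.pos _ (div_pos hbL hpos)
    have hne : bK / lam - 1 ≠ 0 := by linarith
    have hεne : ε ≠ 0 := ne_of_gt hε
    have hlamne : lam ≠ 0 := ne_of_gt hpos
    have hφ₂ne : φ₂ (bL / lam) ≠ 0 := ne_of_gt hφ₂pos
    have hbKne : bK ≠ 0 := ne_of_gt hbK
    have hfε : f ε = lam := by simp only [hf]; rw [if_neg hεne]
    have hf0 : f 0 = bK := by simp only [hf]; norm_num
    rw [slope_def_field, hfε, hf0]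
    simp only [hg, ht, ← hlam, hc, hslope]
    field_simp
    ring
  have hid : Tendsto (fun s : ℝ => s) (nhdsWithin 1 (Set.Ioi 1)) (nhds 1) :=
    (continuous_id.tendsto 1).mono_left nhdsWithin_le_nhds
  have hgt : Tendsto g (nhdsWithin 1 (Set.Ioi 1)) (nhds (bK * φ₂ (bL / bK) / d)) := by
    have hφ₂c : ContinuousAt φ₂ (bL / bK) :=
      h₂.contOn.continuousAt (Ioi_mem_nhds (div_pos hbL hbK))
    have hmul : Tendsto (fun s : ℝ => bL / bK * s) (nhdsWithin 1 (Set.Ioi 1))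
        (nhds (bL / bK)) := by
      have := hid.const_mul (bL / bK)
      simpa using this
    have h2 : Tendsto (fun s : ℝ => φ₂ (bL / bK * s)) (nhdsWithin 1 (Set.Ioi 1))
        (nhds (φ₂ (bL / bK))) := hφ₂c.tendsto.comp hmul
    have hden : Tendsto (fun s : ℝ => s * slope φ₁ 1 s) (nhdsWithin 1 (Set.Ioi 1))
        (nhds d) := by
      have := hid.mul hd
      simpa using this
    have := (tendsto_const_nhds (x := bK) (f := nhdsWithin 1 (Set.Ioi 1))).mul h2
    exact this.div hden (ne_of_lt hdneg)
  have htt : Tendsto t (nhdsWithin 0 (Set.Ioi 0)) (nhdsWithin 1 (Set.Ioi 1)) := by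
    apply tendsto_nhdsWithin_of_tendsto_nhds_of_eventually_within
    · have h0 : Tendsto (fun ε => orliczComb φ₁ φ₂ ε bK bL) (nhdsWithin 0 (Set.Ioi 0))
          (nhds bK) := tendsto_orliczComb h₁ h₂ hbK hbL
      have := (tendsto_const_nhds (x := bK) (f := nhdsWithin 0 (Set.Ioi 0))).div h0
        (ne_of_gt hbK)
      rw [div_self (ne_of_gt hbK)] at this; exact this
    · filter_upwards [self_mem_nhdsWithin] with ε hε
      obtain ⟨hpos, hlt, -, -⟩ := orliczComb_spec h₁ h₂ hε hbK hbL
      exact mem_Ioi.2 ((one_lt_div hpos).2 hlt)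
  have hcomp : Tendsto (fun ε => g (t ε)) (nhdsWithin 0 (Set.Ioi 0))
      (nhds (bK * φ₂ (bL / bK) / d)) := hgt.comp htt
  apply hcomp.congr'
  filter_upwards [self_mem_nhdsWithin] with ε hε
  exact (hkey ε hε).symm

/-- First-order variational formula: the right derivative at `ε = 0` of
`ε ↦ b(K +_φ ε·L, u)^{n-i}` (where `b(K +_φ 0·L, u) = b(K,u)`) equals
`((n-i)/(φ₁)'_r(1)) · φ₂(b(L,u)/b(K,u)) · b(K,u)^{n-i}`, where `(φ₁)'_r(1)` is
the right derivative of `φ₁` at `1`, which exists and is negative. -/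
theorem orliczComb_pow_hasDerivWithinAt {n : ℕ} (hn : 2 ≤ n) (i : ℕ) (hi : i < n)
    (φ₁ φ₂ : ℝ → ℝ) (hφ₁ : IsOrliczPhi φ₁) (hφ₂ : IsOrliczPhi φ₂)
    (K L : Set (Euc n)) (hK : IsConvexBody K) (hL : IsConvexBody L)
    (u : Euc n) (hu : ‖u‖ = 1) :
    ∃ d : ℝ, HasDerivWithinAt φ₁ d (Set.Ici 1) 1 ∧ d < 0 ∧
      HasDerivWithinAt
        (fun ε : ℝ =>
          (if ε = 0 then halfWidth K u
            else orliczComb φ₁ φ₂ ε (halfWidth K u) (halfWidth L u)) ^ ((n : ℝ) - i))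
        (((n : ℝ) - i) / d * φ₂ (halfWidth L u / halfWidth K u) *
          halfWidth K u ^ ((n : ℝ) - i))
        (Set.Ici 0) 0 := by
  set bK := halfWidth K u with hbKdef
  set bL := halfWidth L u with hbLdef
  have hbK : 0 < bK := halfWidth_pos hK hu
  have hbL : 0 < bL := halfWidth_pos hL hu
  obtain ⟨d, hd, hdneg⟩ := hφ₁.exists_rightDeriv
  refine ⟨d, ?_, hdneg, ?_⟩
  · rw [hasDerivWithinAt_iff_tendsto_slope]
    have hset : Set.Ici (1:ℝ) \ {1} = Set.Ioi 1 := by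
      ext x; simp [lt_iff_le_and_ne, eq_comm]
    rw [hset]; exact hd
  · have hbase := orliczComb_hasDerivWithinAt hφ₁ hφ₂ hbK hbL hd hdneg
    have h0 : (if (0:ℝ) = 0 then bK else orliczComb φ₁ φ₂ 0 bK bL) = bK := if_pos rfl
    have hder := hbase.rpow_const (p := (n : ℝ) - i)
      (Or.inl (by rw [h0]; exact ne_of_gt hbK))
    rw [h0] at hder
    have heq : ((n : ℝ) - i) / d * φ₂ (bL / bK) * bK ^ ((n : ℝ) - i) =
        bK * φ₂ (bL / bK) / d * ((n : ℝ) - i) * bK ^ ((n : ℝ) - i - 1) := by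
      have hpow : bK ^ ((n : ℝ) - i - 1) = bK ^ ((n : ℝ) - i) / bK := by
        rw [Real.rpow_sub hbK ((n : ℝ) - i) 1, Real.rpow_one]
      rw [hpow]
      have hcanc : bK ^ ((n : ℝ) - i) / bK * bK = bK ^ ((n : ℝ) - i) :=
        div_mul_cancel₀ _ (ne_of_gt hbK)
      linear_combination (-(φ₂ (bL / bK) * ((n : ℝ) - i) / d)) * hcanc
    rw [heq]
    exact hder

end
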